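/- arXiv:2101.04819 — 3 statements merged into one kernel-verified Lean document; each statement's English description precedes it below -/
import Mathlib

section
/- Let k ≥ 0, let F, G : Set^k → Set be functors, and let α : F → G be a natural transformation. Then the graph relation transformer ⟨α⟩ is functorial on relations: for any k-tuples of relations R_i ⊆ A_i × B_i and S_i ⊆ C_i × D_i and any functions β_i : A_i → C_i and β'_i : B_i → D_i such that (β_i a, β'_i b) ∈ S_i whenever (a, b) ∈ R_i (for each i = 1,…,k), every pair (x, y) ∈ ⟨α⟩(R_1,…,R_k) satisfies (F(β_1,…,β_k) x, G(β'_1,…,β'_k) y) ∈ ⟨α⟩(S_1,…,S_k). In particular ⟨α⟩ defines a functor from Rel^k to Rel whose object part sends (A_i, B_i, R_i)_{i=1..k} to (F Ā, G B̄, ⟨α⟩R̄). (Lemma 4.2 of the paper.) -/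
open CategoryTheory

universe u

/-- The graph relation transformer `⟨α⟩` of a natural transformation `α : F ⟶ G`
between functors `F, G : Set^k → Set`.  Given a `k`-tuple of relations
`R i ⊆ A i × B i` (each viewed as a set with the two projections `r¹ i`, `r² i`),
it produces the relation
`⟨α⟩R̄ = { (F r̄¹ z, α_{B̄} (F r̄² z)) : z ∈ F R̄ } ⊆ F Ā × G B̄`. -/
def graphRelTransformer {k : ℕ} (F G : (Fin k → Type u) ⥤ Type u) (α : F ⟶ G)
    {A B : Fin k → Type u} (R : ∀ i, Set (A i × B i)) :
    Set (F.obj A × G.obj B) :=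
  { q | ∃ z : F.obj (fun i => ↥(R i)),
      q.1 = F.map (fun i => TypeCat.ofHom (fun (p : ↥(R i)) => p.1.1)) z ∧
      q.2 = α.app B (F.map (fun i => TypeCat.ofHom (fun (p : ↥(R i)) => p.1.2)) z) }

/-! The witness `z ∈ F R̄` of `(x, y)` is pushed along the restriction `R̄ → S̄` of `β̄ × β̄'`.
Since this restriction commutes with the projections, functoriality of `F` gives the first
component, and naturality of `α` moves `G β̄'` inside `α` to give the second. -/

theorem CategoryTheory.Functor.map_map_apply_of_comp_eq {J : Type*} [Category J]
    (F : J ⥤ Type*) {X Y Y' Z : J} {f : X ⟶ Y} {g : Y ⟶ Z} {f' : X ⟶ Y'} {g' : Y' ⟶ Z}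
    (w : f ≫ g = f' ≫ g') (z : F.obj X) :
    F.map g (F.map f z) = F.map g' (F.map f' z) := by
  rw [← F.map_comp_apply, w, F.map_comp_apply]

/-- Lemma 4.2: the graph relation transformer `⟨α⟩` of a natural transformation
`α : F ⟶ G` is functorial on relations: given `k`-tuples of relations
`R i ⊆ A i × B i` and `S i ⊆ C i × D i`, and functions `β i : A i → C i`,
`β' i : B i → D i` mapping `R i` into `S i`, every pair `(x, y) ∈ ⟨α⟩R̄`
satisfies `(F β̄ x, G β̄' y) ∈ ⟨α⟩S̄`. -/
theorem graphRelTransformer_functorial {k : ℕ}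
    (F G : (Fin k → Type u) ⥤ Type u) (α : F ⟶ G)
    {A B C D : Fin k → Type u}
    (R : ∀ i, Set (A i × B i)) (S : ∀ i, Set (C i × D i))
    (β : ∀ i, A i → C i) (β' : ∀ i, B i → D i)
    (h : ∀ i, ∀ a : A i, ∀ b : B i, (a, b) ∈ R i → (β i a, β' i b) ∈ S i)
    (x : F.obj A) (y : G.obj B)
    (hxy : (x, y) ∈ graphRelTransformer F G α R) :
    (F.map (fun i => TypeCat.ofHom (β i)) x, G.map (fun i => TypeCat.ofHom (β' i)) y) ∈ graphRelTransformer F G α S := by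
  obtain ⟨z, rfl, rfl⟩ := hxy
  have hmaps (i : Fin k) : Set.MapsTo (Prod.map (β i) (β' i)) (R i) (S i) :=
    fun p hp => h i p.1 p.2 hp
  let γ : (fun i => ↥(R i)) ⟶ (fun i => ↥(S i)) := fun i => TypeCat.ofHom (hmaps i).restrict
  have fst_comm : (fun i => TypeCat.ofHom (fun p : R i => p.1.1)) ≫ (fun i => TypeCat.ofHom (β i)) =
      γ ≫ (fun i => TypeCat.ofHom (fun p : S i => p.1.1)) := rfl
  have snd_comm : (fun i => TypeCat.ofHom (fun p : R i => p.1.2)) ≫ (fun i => TypeCat.ofHom (β' i)) =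
      γ ≫ (fun i => TypeCat.ofHom (fun p : S i => p.1.2)) := rfl
  refine ⟨F.map γ z, F.map_map_apply_of_comp_eq fst_comm z, ?_⟩
  rw [← NatTrans.naturality_apply, F.map_map_apply_of_comp_eq snd_comm z]
end

section
/- Let k ≥ 0, let F, G : Set^k → Set be functors, let α : F → G be a natural transformation, and let f_i : A_i → B_i (i = 1,…,k) be functions. Then the graph relation transformer applied to the graph relations of the f_i is the graph relation of the composite: ⟨α⟩(⟨f_1⟩,…,⟨f_k⟩) = ⟨G(f_1,…,f_k) ∘ α_{(A_1,…,A_k)}⟩ = ⟨α_{(B_1,…,B_k)} ∘ F(f_1,…,f_k)⟩. Explicitly, for x ∈ F(A_1,…,A_k) and y ∈ G(B_1,…,B_k), one has (x, y) ∈ ⟨α⟩(⟨f_1⟩,…,⟨f_k⟩) if and only if y = G(f_1,…,f_k)(α_{(A_1,…,A_k)} x), equivalently if and only if y = α_{(B_1,…,B_k)}(F(f_1,…,f_k) x). (Lemma 4.3 of the paper.) -/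
/-! Since `⟨f⟩` satisfies `r² = f ∘ r¹`, functoriality gives `F r² = F f̄ ∘ F r¹`, so every pair
in `⟨α⟩⟨f̄⟩` has the form `(x, α (F f̄ x))`; conversely `a ↦ (a, f a)` is a section of `r¹`,
which produces a witness for each `x`. Naturality of `α` identifies the two composites. -/

open CategoryTheory

universe u

/-- The graph relation `⟨f⟩ = {(a, f a) : a ∈ A} ⊆ A × B` of a function `f : A → B`. -/
def funGraph {A B : Type u} (f : A → B) : Set (A × B) :=
  { p | p.2 = f p.1 }

section Relations

variable {ι : Type*} {A B : ι → Type u}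

def relFst (R : ∀ i, Set (A i × B i)) : (fun i => ↥(R i)) ⟶ A :=
  fun _ => TypeCat.ofHom fun p => p.1.1

def relSnd (R : ∀ i, Set (A i × B i)) : (fun i => ↥(R i)) ⟶ B :=
  fun _ => TypeCat.ofHom fun p => p.1.2

variable (f : ∀ i, A i → B i)

def toFunGraph : A ⟶ fun i => ↥(funGraph (f i)) :=
  fun i => TypeCat.ofHom fun a => ⟨(a, f i a), rfl⟩

theorem toFunGraph_comp_relFst : toFunGraph f ≫ relFst (fun i => funGraph (f i)) = 𝟙 A :=
  rfl

theorem toFunGraph_comp_relSnd :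
    toFunGraph f ≫ relSnd (fun i => funGraph (f i)) = fun i => TypeCat.ofHom (f i) :=
  rfl

theorem relFst_funGraph_comp :
    relFst (fun i => funGraph (f i)) ≫ (fun i => TypeCat.ofHom (f i)) =
      relSnd (fun i => funGraph (f i)) := by
  funext i
  ext p
  exact p.2.symm

end Relations

theorem mem_graphRelTransformer {k : ℕ} {F G : (Fin k → Type u) ⥤ Type u} {α : F ⟶ G}
    {A B : Fin k → Type u} {R : ∀ i, Set (A i × B i)} {q : F.obj A × G.obj B} :
    q ∈ graphRelTransformer F G α R ↔
      ∃ z, q.1 = F.map (relFst R) z ∧ q.2 = α.app B (F.map (relSnd R) z) :=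
  Iff.rfl

theorem mem_graphRelTransformer_funGraph_iff {k : ℕ}
    (F G : (Fin k → Type u) ⥤ Type u) (α : F ⟶ G)
    {A B : Fin k → Type u} (f : ∀ i, A i → B i) (x : F.obj A) (y : G.obj B) :
    (x, y) ∈ graphRelTransformer F G α (fun i => funGraph (f i)) ↔
      y = α.app B (F.map (fun i => TypeCat.ofHom (f i)) x) := by
  rw [mem_graphRelTransformer]
  constructor
  · rintro ⟨z, rfl, rfl⟩
    rw [← Functor.map_comp_apply, relFst_funGraph_comp]
  · rintro rfl
    refine ⟨F.map (toFunGraph f) x, ?_, ?_⟩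
    · rw [← Functor.map_comp_apply, toFunGraph_comp_relFst, Functor.map_id_apply]
    · rw [← Functor.map_comp_apply, toFunGraph_comp_relSnd]

/-- Lemma 4.3: the graph relation transformer of `α : F ⟶ G` applied to the graph
relations of functions `f i : A i → B i` is the graph relation of the composite:
`⟨α⟩(⟨f₁⟩,…,⟨f_k⟩) = ⟨G f̄ ∘ α_Ā⟩ = ⟨α_B̄ ∘ F f̄⟩`.  Explicitly,
`(x, y) ∈ ⟨α⟩⟨f̄⟩` iff `y = G f̄ (α_Ā x)`, equivalently iff `y = α_B̄ (F f̄ x)`. -/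
theorem graphRelTransformer_funGraph {k : ℕ}
    (F G : (Fin k → Type u) ⥤ Type u) (α : F ⟶ G)
    {A B : Fin k → Type u} (f : ∀ i, A i → B i)
    (x : F.obj A) (y : G.obj B) :
    ((x, y) ∈ graphRelTransformer F G α (fun i => funGraph (f i)) ↔
        y = G.map (fun i => TypeCat.ofHom (f i)) (α.app A x)) ∧
    ((x, y) ∈ graphRelTransformer F G α (fun i => funGraph (f i)) ↔
        y = α.app B (F.map (fun i => TypeCat.ofHom (f i)) x)) := by
  have hmem := mem_graphRelTransformer_funGraph_iff F G α f x y
  refine ⟨?_, hmem⟩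
  rwa [← NatTrans.naturality_apply α]
end

section
/- Let K : C → D be a functor, F : C → Set a Set-valued functor, and let (L, η) be a pointwise left Kan extension of F along K, with L : D → Set and unit η : F → L ∘ K. Suppose S assigns to each object d of D a subset S(d) ⊆ L(d) such that (i) L(g)(x) ∈ S(d') for every morphism g : d → d' of D and every x ∈ S(d), and (ii) η_c(y) ∈ S(K c) for every object c of C and every y ∈ F(c). Then S(d) = L(d) for every object d of D. (Proposition 8.3 of the paper, which states it for C = Set^k, D = Set^h, and L a subfunctor of Lan_{K̄} F containing the image of the unit; it shows the set and relational interpretations of Lan-types cannot be cut down to proper subfunctors.) -/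
open CategoryTheory Functor

universe w v₁ v₂ u₁ u₂

lemma exists_map_unit_eq_of_isPointwiseLeftKanExtension
    {C : Type u₁} [Category.{v₁} C] {D : Type u₂} [Category.{v₂} D]
    {K : C ⥤ D} {F : C ⥤ Type w} {L : D ⥤ Type w} {η : F ⟶ K ⋙ L}
    (hpt : (LeftExtension.mk L η).IsPointwiseLeftKanExtension) {d : D} (x : L.obj d) :
    ∃ (c : C) (g : K.obj c ⟶ d) (y : F.obj c), L.map g (η.app c y) = x := by
  obtain ⟨j, y, hy⟩ := Limits.Types.jointly_surjective_of_isColimit (hpt d) x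
  exact ⟨j.left, j.hom, y, hy⟩

/-- Proposition 8.3: let `(L, η)` be a pointwise left Kan extension of a
`Set`-valued functor `F : C ⥤ Set` along `K : C ⥤ D`.  If `S` assigns to each
object `d` of `D` a subset `S d ⊆ L d` that is (i) closed under the functorial
action of `L` and (ii) contains the image of the unit `η`, then `S d` is all of
`L d` for every `d`.  (No proper subfunctor of a pointwise left Kan extension
contains the image of the unit.) -/
theorem subfunctor_of_pointwise_lan_is_all
    {C : Type u₁} [Category.{v₁} C] {D : Type u₂} [Category.{v₂} D]
    (K : C ⥤ D) (F : C ⥤ Type w) (L : D ⥤ Type w) (η : F ⟶ K ⋙ L)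
    (hpt : (LeftExtension.mk L η).IsPointwiseLeftKanExtension)
    (S : ∀ d : D, Set (L.obj d))
    (h1 : ∀ {d d' : D} (g : d ⟶ d') (x : L.obj d), x ∈ S d → L.map g x ∈ S d')
    (h2 : ∀ (c : C) (y : F.obj c), η.app c y ∈ S (K.obj c)) :
    ∀ d : D, S d = Set.univ := by
  intro d
  refine Set.eq_univ_of_forall fun x => ?_
  obtain ⟨c, g, y, rfl⟩ := exists_map_unit_eq_of_isPointwiseLeftKanExtension hpt x
  exact h1 g _ (h2 c y)
end
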